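/- Let 0 < α < 1 and let φ : [0,∞) → ℝ be continuously differentiable with φ(0) ≥ 0. If there exists t* > 0 with φ(t*) = 0 and φ(t) > 0 for 0 ≤ t < t*, and φ is nonincreasing in a neighborhood of t* from the left, then the left Caputo derivative satisfies (C D_t^α φ)(t*) ≤ 0. -/

import Mathlib

/-!
Write `g(s) = (t - s)^(-α)`. For `u < t`, integration by parts on `[a, u]` gives
`∫_a^u φ' g = φ(u) g(u) - φ(a) g(a) - α ∫_a^u φ(s) (t - s)^(-α-1) ds ≤ φ(u) g(u)`,
since `φ ≥ 0` there and `g' ≥ 0`. As `φ(t) = 0`, `φ(u) g(u) = -(slope of φ at t) · (t - u)^(1-α)`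
tends to `0` when `u → t⁻`, while the left side tends to the full integral because `φ' g`
is integrable on `[a, t]` for `α < 1`.
-/

open MeasureTheory intervalIntegral Set Filter Topology

theorem intervalIntegrable_sub_rpow_neg {α : ℝ} (hα : α < 1) (a t : ℝ) :
    IntervalIntegrable (fun s => (t - s) ^ (-α)) volume a t := by
  simpa using ((intervalIntegrable_rpow' (a := 0) (b := t - a) (by linarith)).comp_sub_left t).symm

theorem integral_mul_sub_rpow_neg_le {φ φ' : ℝ → ℝ} {a u t α : ℝ} (hα : 0 ≤ α) (hau : a ≤ u)
    (hut : u < t) (hφ : ∀ x ∈ Icc a u, HasDerivAt φ (φ' x) x)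
    (hφ' : IntervalIntegrable φ' volume a u) (hφ_nonneg : ∀ x ∈ Icc a u, 0 ≤ φ x) :
    ∫ s in a..u, φ' s * (t - s) ^ (-α) ≤ φ u * (t - u) ^ (-α) := by
  rw [← uIcc_of_le hau] at hφ hφ_nonneg
  have hg : ∀ x ∈ uIcc a u,
      HasDerivAt (fun s => (t - s) ^ (-α)) (α * (t - x) ^ (-α - 1)) x := by
    intro x hx
    rw [uIcc_of_le hau] at hx
    convert ((hasDerivAt_id' x).const_sub t).rpow_const (p := -α) (Or.inl (by linarith [hx.2]))
      using 1
    ring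
  have hg' : ContinuousOn (fun x => α * (t - x) ^ (-α - 1)) (uIcc a u) := by
    refine continuousOn_const.mul ((continuousOn_const.sub (continuousOn_id' _)).rpow_const ?_)
    intro x hx
    rw [uIcc_of_le hau] at hx
    exact Or.inl (sub_ne_zero.2 (by linarith [hx.2]))
  have hibp := integral_mul_deriv_eq_deriv_mul hg hφ hg'.intervalIntegrable hφ'
  have hleft : 0 ≤ (t - a) ^ (-α) * φ a :=
    mul_nonneg (Real.rpow_nonneg (by linarith) _) (hφ_nonneg a left_mem_uIcc)
  have hrest : 0 ≤ ∫ x in a..u, α * (t - x) ^ (-α - 1) * φ x := by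
    refine integral_nonneg hau fun x hx => mul_nonneg (mul_nonneg hα ?_) ?_
    · exact Real.rpow_nonneg (by linarith [hx.2]) _
    · exact hφ_nonneg x (by rwa [uIcc_of_le hau])
  simp only [mul_comm (φ' _)]
  linarith

theorem tendsto_mul_sub_rpow_neg_nhdsLT {φ : ℝ → ℝ} {φ't t α : ℝ} (hα : α < 1)
    (hφ : HasDerivAt φ φ't t) (hzero : φ t = 0) :
    Tendsto (fun u => φ u * (t - u) ^ (-α)) (𝓝[<] t) (𝓝 0) := by
  have hslope : Tendsto (slope φ t) (𝓝[<] t) (𝓝 φ't) :=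
    (hasDerivAt_iff_tendsto_slope.1 hφ).mono_left (nhdsLT_le_nhdsNE t)
  have hpow : Tendsto (fun u => (t - u) ^ (1 - α)) (𝓝[<] t) (𝓝 0) := by
    have : ContinuousAt (fun u => (t - u) ^ (1 - α)) t :=
      (continuousAt_const.sub continuousAt_id).rpow_const (Or.inr (by linarith))
    simpa [Real.zero_rpow (by linarith : 1 - α ≠ 0)] using this.tendsto.mono_left nhdsWithin_le_nhds
  have hprod := (hslope.mul hpow).neg
  rw [mul_zero, neg_zero] at hprod
  refine hprod.congr' (eventually_nhdsWithin_of_forall fun u (hu : u < t) => ?_)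
  have hd : 0 < t - u := sub_pos.2 hu
  rw [slope_def_field, hzero, sub_zero, show 1 - α = -α + 1 by ring, Real.rpow_add hd,
    Real.rpow_one, show u - t = -(t - u) by ring]
  field_simp

theorem integral_mul_sub_rpow_neg_nonpos {φ φ' : ℝ → ℝ} {a t α : ℝ} (hα0 : 0 ≤ α) (hα1 : α < 1)
    (hat : a ≤ t) (hφ : ∀ x ∈ Icc a t, HasDerivAt φ (φ' x) x) (hφ' : ContinuousOn φ' (Icc a t))
    (hφ_nonneg : ∀ x ∈ Ico a t, 0 ≤ φ x) (hzero : φ t = 0) :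
    ∫ s in a..t, φ' s * (t - s) ^ (-α) ≤ 0 := by
  rcases hat.eq_or_lt with rfl | hat
  · simp
  have hint : IntervalIntegrable (fun s => φ' s * (t - s) ^ (-α)) volume a t :=
    (intervalIntegrable_sub_rpow_neg hα1 a t).continuousOn_mul (by rwa [uIcc_of_le hat.le])
  have hprimitive : Tendsto (fun u => ∫ s in a..u, φ' s * (t - s) ^ (-α)) (𝓝[<] t)
      (𝓝 (∫ s in a..t, φ' s * (t - s) ^ (-α))) := by
    have := continuousOn_primitive_interval' hint left_mem_uIcc t right_mem_uIcc
    rw [uIcc_of_le hat.le] at this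
    exact this.mono_of_mem_nhdsWithin (Icc_mem_nhdsLT hat)
  have hbound : ∀ᶠ u in 𝓝[<] t,
      ∫ s in a..u, φ' s * (t - s) ^ (-α) ≤ φ u * (t - u) ^ (-α) := by
    filter_upwards [Ico_mem_nhdsLT hat] with u hu
    have hsub : Icc a u ⊆ Icc a t := Icc_subset_Icc_right hu.2.le
    exact integral_mul_sub_rpow_neg_le hα0 hu.1 hu.2 (fun x hx => hφ x (hsub hx))
      ((hφ'.mono hsub).intervalIntegrable_of_Icc hu.1)
      (fun x hx => hφ_nonneg x ⟨hx.1, hx.2.trans_lt hu.2⟩)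
  exact le_of_tendsto_of_tendsto hprimitive
    (tendsto_mul_sub_rpow_neg_nhdsLT hα1 (hφ t (right_mem_Icc.2 hat.le)) hzero) hbound

theorem stmt_13_general (α : ℝ) (hα0 : 0 < α) (hα1 : α < 1)
    (φ : ℝ → ℝ) (hφ : ContDiff ℝ 1 φ)
    (tstar : ℝ) (htstar : 0 < tstar) (hzero : φ tstar = 0)
    (hpos : ∀ t : ℝ, 0 ≤ t → t < tstar → 0 < φ t) :
    (1 / Real.Gamma (1 - α)) * ∫ s in (0 : ℝ)..tstar, deriv φ s * (tstar - s) ^ (-α) ≤ 0 := by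
  have hΓ : 0 ≤ 1 / Real.Gamma (1 - α) :=
    (one_div_pos.2 (Real.Gamma_pos_of_pos (by linarith))).le
  refine mul_nonpos_of_nonneg_of_nonpos hΓ ?_
  exact integral_mul_sub_rpow_neg_nonpos hα0.le hα1 htstar.le
    (fun x _ => (hφ.differentiable one_ne_zero x).hasDerivAt)
    (hφ.continuous_deriv le_rfl).continuousOn (fun x hx => (hpos x hx.1 hx.2).le) hzero

theorem stmt_13 (α : ℝ) (hα0 : 0 < α) (hα1 : α < 1)
    (φ : ℝ → ℝ) (hφ : ContDiff ℝ 1 φ) (hφ0 : 0 ≤ φ 0)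
    (tstar : ℝ) (htstar : 0 < tstar) (hzero : φ tstar = 0)
    (hpos : ∀ t : ℝ, 0 ≤ t → t < tstar → 0 < φ t)
    (hmono : ∃ δ > 0, AntitoneOn φ (Set.Ioc (tstar - δ) tstar)) :
    (1 / Real.Gamma (1 - α)) * ∫ s in (0 : ℝ)..tstar, deriv φ s * (tstar - s) ^ (-α) ≤ 0 :=
  stmt_13_general α hα0 hα1 φ hφ tstar htstar hzero hpos
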